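/- Let X be a nondegenerate real random variable with continuous CDF Φ, supported on the nonnegative reals (X ≥ 0 a.s.), and let a̲ = 1 < ā. Define for H ∈ (0,1] the diameter δ(H) = sup_{x∈ℝ} |Φ(x) − Φ(ā^{H−H₀} x)|. Then δ(H) = 0 if and only if H = H₀, δ is non-increasing on H ≤ H₀, and non-decreasing on H ≥ H₀. -/

import Mathlib

/-!
Monotonicity of `Φ` gives the monotonicity claims pointwise: when `c` lies between `1` and `d`,
the point `c x` lies between `x` and `d x`, so `|Φ x - Φ (c x)| ≤ |Φ x - Φ (d x)|`.
For the zero set: if `δ(H) = 0` with `c = ā^(H-H₀) ≠ 1`, then `Φ` is invariant under `x ↦ c x`,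
hence under `x ↦ cⁿ x` or `x ↦ c⁻ⁿ x`, and continuity at `0` makes `Φ` constant; but a CDF of a
nonnegative variable vanishes on the negative axis and is positive far to the right.
-/

open MeasureTheory Filter Topology Set

section Monotone

variable {α β : Type*} [LinearOrder α] [AddCommGroup β] [LinearOrder β] [IsOrderedAddMonoid β]

lemma Monotone.abs_sub_le_abs_sub_of_mem_uIcc {f : α → β} (hf : Monotone f) {x y z : α}
    (hy : y ∈ uIcc x z) : |f x - f y| ≤ |f x - f z| := by
  simpa only [abs_sub_comm (f x)] using abs_sub_left_of_mem_uIcc (hf.mapsTo_uIcc hy)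

end Monotone

lemma mul_mem_uIcc_mul {𝕜 : Type*} [Field 𝕜] [LinearOrder 𝕜] [IsStrictOrderedRing 𝕜]
    {a b c : 𝕜} (hc : c ∈ uIcc a b) (x : 𝕜) : c * x ∈ uIcc (a * x) (b * x) :=
  image_mul_const_uIcc x a b ▸ mem_image_of_mem (· * x) hc

section ScaleInvariant

variable {Y : Type*} [TopologicalSpace Y] [T2Space Y] {f : ℝ → Y} {c : ℝ}

lemma apply_eq_apply_zero_of_apply_mul_eq_of_abs_lt_one (hf : ContinuousAt f 0) (hc : |c| < 1)
    (h : ∀ x, f (c * x) = f x) (x : ℝ) : f x = f 0 := by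
  have hpow : ∀ n : ℕ, f (c ^ n * x) = f x := by
    intro n
    induction n with
    | zero => simp
    | succ n ih => rw [pow_succ', mul_assoc, h, ih]
  have hlim : Tendsto (fun n : ℕ => c ^ n * x) atTop (𝓝 0) := by
    simpa only [zero_mul] using (tendsto_pow_atTop_nhds_zero_of_abs_lt_one hc).mul_const x
  exact tendsto_const_nhds_iff.1 ((hf.tendsto.comp hlim).congr hpow)

lemma apply_eq_apply_zero_of_apply_mul_eq (hf : ContinuousAt f 0) (hc₀ : c ≠ 0) (hc₁ : |c| ≠ 1)
    (h : ∀ x, f (c * x) = f x) (x : ℝ) : f x = f 0 := by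
  rcases hc₁.lt_or_gt with hlt | hgt
  · exact apply_eq_apply_zero_of_apply_mul_eq_of_abs_lt_one hf hlt h x
  · refine apply_eq_apply_zero_of_apply_mul_eq_of_abs_lt_one (c := c⁻¹) hf ?_ (fun y => ?_) x
    · rw [abs_inv]
      exact inv_lt_one_of_one_lt₀ hgt
    · rw [← h, mul_inv_cancel_left₀ hc₀]

end ScaleInvariant

noncomputable def scaleDiam (Φ : ℝ → ℝ) (c : ℝ) : ℝ := ⨆ x : ℝ, |Φ x - Φ (c * x)|

namespace scaleDiam

variable {Φ : ℝ → ℝ}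

lemma bddAbove_range (hΦ : Bornology.IsBounded (range Φ)) (c : ℝ) :
    BddAbove (range fun x => |Φ x - Φ (c * x)|) := by
  obtain ⟨C, hC⟩ := Metric.isBounded_iff.1 hΦ
  exact ⟨C, forall_mem_range.2 fun x => by
    simpa only [Real.dist_eq] using hC (mem_range_self x) (mem_range_self (c * x))⟩

lemma le_of_mem_uIcc (hmono : Monotone Φ) (hbdd : Bornology.IsBounded (range Φ)) {c d : ℝ}
    (hc : c ∈ uIcc 1 d) : scaleDiam Φ c ≤ scaleDiam Φ d :=
  ciSup_mono (bddAbove_range hbdd d) fun x =>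
    hmono.abs_sub_le_abs_sub_of_mem_uIcc (by simpa only [one_mul] using mul_mem_uIcc_mul hc x)

lemma antitoneOn (hmono : Monotone Φ) (hbdd : Bornology.IsBounded (range Φ)) :
    AntitoneOn (scaleDiam Φ) (Iic 1) := fun _ _ _ hd hcd =>
  le_of_mem_uIcc hmono hbdd (Icc_subset_uIcc' ⟨hcd, hd⟩)

lemma monotoneOn (hmono : Monotone Φ) (hbdd : Bornology.IsBounded (range Φ)) :
    MonotoneOn (scaleDiam Φ) (Ici 1) := fun _ hc _ _ hcd =>
  le_of_mem_uIcc hmono hbdd (Icc_subset_uIcc ⟨hc, hcd⟩)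

lemma eq_zero_iff (hcont : ContinuousAt Φ 0) (hbdd : Bornology.IsBounded (range Φ))
    (hΦ : ∃ x y, Φ x ≠ Φ y) {c : ℝ} (hc : 0 < c) : scaleDiam Φ c = 0 ↔ c = 1 := by
  refine ⟨fun h0 => ?_, fun h1 => by simp [scaleDiam, h1]⟩
  have hinv : ∀ x, Φ (c * x) = Φ x := fun x => by
    have hx : |Φ x - Φ (c * x)| ≤ 0 := h0 ▸ le_ciSup (bddAbove_range hbdd c) x
    linarith [abs_nonpos_iff.1 hx]
  by_contra hc₁
  obtain ⟨x, y, hxy⟩ := hΦ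
  have hconst := apply_eq_apply_zero_of_apply_mul_eq hcont hc.ne' (by rwa [abs_of_pos hc]) hinv
  exact hxy ((hconst x).trans (hconst y).symm)

end scaleDiam

section CDF

variable {Ω : Type*} [MeasurableSpace Ω] (ℙ : Measure Ω) (X : Ω → ℝ) {Φ : ℝ → ℝ}

lemma cdf_monotone [IsFiniteMeasure ℙ] (hΦ : ∀ x, Φ x = (ℙ {ω | X ω ≤ x}).toReal) :
    Monotone Φ := fun x y hxy => by
  rw [hΦ, hΦ]
  exact ENNReal.toReal_mono (measure_ne_top _ _) (measure_mono fun ω hω => le_trans hω hxy)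

lemma cdf_isBounded_range [IsProbabilityMeasure ℙ] (hΦ : ∀ x, Φ x = (ℙ {ω | X ω ≤ x}).toReal) :
    Bornology.IsBounded (range Φ) :=
  (Metric.isBounded_Icc (0 : ℝ) 1).subset <| range_subset_iff.2 fun x =>
    hΦ x ▸ ⟨measureReal_nonneg, measureReal_le_one⟩

lemma cdf_neg_one_eq_zero_of_ae_nonneg (hΦ : ∀ x, Φ x = (ℙ {ω | X ω ≤ x}).toReal)
    (hnonneg : ∀ᵐ ω ∂ℙ, 0 ≤ X ω) : Φ (-1) = 0 := by
  have hnull : ℙ {ω | X ω ≤ -1} = 0 :=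
    measure_mono_null (fun ω (hω : X ω ≤ -1) => (not_le.2 (by linarith) : ¬ 0 ≤ X ω))
      (ae_iff.1 hnonneg)
  rw [hΦ, hnull, ENNReal.toReal_zero]

lemma cdf_exists_ne_zero [IsProbabilityMeasure ℙ] (hΦ : ∀ x, Φ x = (ℙ {ω | X ω ≤ x}).toReal) :
    ∃ n : ℕ, Φ n ≠ 0 := by
  have hcover : (⋃ n : ℕ, {ω | X ω ≤ n}) = univ :=
    eq_univ_of_forall fun ω => mem_iUnion.2 (exists_nat_ge (X ω))
  obtain ⟨n, hn⟩ := exists_measure_pos_of_not_measure_iUnion_null (μ := ℙ)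
    (s := fun n : ℕ => {ω | X ω ≤ n}) (by simp [hcover])
  exact ⟨n, by rw [hΦ]; exact (ENNReal.toReal_pos hn.ne' (measure_ne_top _ _)).ne'⟩

end CDF

theorem stmt3_general {Ω : Type*} [MeasurableSpace Ω] (ℙ : Measure Ω) [IsProbabilityMeasure ℙ]
    (X : Ω → ℝ) (Φ : ℝ → ℝ)
    (hΦ : ∀ x, Φ x = (ℙ {ω | X ω ≤ x}).toReal)
    (hcont : Continuous Φ)
    (hnonneg : ∀ᵐ ω ∂ℙ, 0 ≤ X ω)
    (H₀ : ℝ)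
    (ab : ℝ) (hab : 1 < ab)
    (δ : ℝ → ℝ)
    (hδ : ∀ H, δ H = ⨆ x : ℝ, |Φ x - Φ (ab ^ (H - H₀) * x)|) :
    (∀ H ∈ Set.Ioc (0:ℝ) 1, (δ H = 0 ↔ H = H₀)) ∧
    (∀ H₁ ∈ Set.Ioc (0:ℝ) 1, ∀ H₂ ∈ Set.Ioc (0:ℝ) 1, H₁ ≤ H₂ → H₂ ≤ H₀ → δ H₂ ≤ δ H₁) ∧
    (∀ H₁ ∈ Set.Ioc (0:ℝ) 1, ∀ H₂ ∈ Set.Ioc (0:ℝ) 1, H₁ ≤ H₂ → H₀ ≤ H₁ → δ H₁ ≤ δ H₂) := by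
  have hδ' : ∀ H, δ H = scaleDiam Φ (ab ^ (H - H₀)) := hδ
  have hmono : Monotone Φ := cdf_monotone ℙ X hΦ
  have hbdd : Bornology.IsBounded (range Φ) := cdf_isBounded_range ℙ X hΦ
  have hnonconst : ∃ x y, Φ x ≠ Φ y := by
    obtain ⟨n, hn⟩ := cdf_exists_ne_zero ℙ X hΦ
    exact ⟨n, -1, by rwa [cdf_neg_one_eq_zero_of_ae_nonneg ℙ X hΦ hnonneg]⟩
  have hscale : Monotone fun H => ab ^ (H - H₀) :=
    (Real.monotone_rpow_of_base_ge_one hab.le).comp fun _ _ h => sub_le_sub_right h H₀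
  have hscale_le_one {H : ℝ} (hH : H ≤ H₀) : ab ^ (H - H₀) ≤ 1 :=
    Real.rpow_le_one_of_one_le_of_nonpos hab.le (sub_nonpos.2 hH)
  have hone_le_scale {H : ℝ} (hH : H₀ ≤ H) : 1 ≤ ab ^ (H - H₀) :=
    Real.one_le_rpow hab.le (sub_nonneg.2 hH)
  refine ⟨fun H _ => ?_, fun H₁ _ H₂ _ h12 h2 => ?_, fun H₁ _ H₂ _ h12 h1 => ?_⟩
  · rw [hδ', scaleDiam.eq_zero_iff hcont.continuousAt hbdd hnonconst (by positivity),
      ← Real.rpow_zero ab, Real.rpow_right_inj (by positivity) hab.ne', sub_eq_zero]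
  · rw [hδ', hδ']
    exact scaleDiam.antitoneOn hmono hbdd (hscale_le_one (h12.trans h2)) (hscale_le_one h2)
      (hscale h12)
  · rw [hδ', hδ']
    exact scaleDiam.monotoneOn hmono hbdd (hone_le_scale h1) (hone_le_scale (h1.trans h12))
      (hscale h12)

/-- The diameter `δ(H) = sup_x |Φ(x) − Φ(ā^(H−H₀) x)|` vanishes iff `H = H₀`, is
non-increasing for `H ≤ H₀` and non-decreasing for `H ≥ H₀`. -/
theorem stmt3 {Ω : Type*} [MeasurableSpace Ω] (ℙ : Measure Ω) [IsProbabilityMeasure ℙ]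
    (X : Ω → ℝ) (Φ : ℝ → ℝ)
    (hΦ : ∀ x, Φ x = (ℙ {ω | X ω ≤ x}).toReal)
    (hcont : Continuous Φ)
    (hnonneg : ∀ᵐ ω ∂ℙ, 0 ≤ X ω)
    (hnondeg : ¬ ∃ c : ℝ, ∀ᵐ ω ∂ℙ, X ω = c)
    (H₀ : ℝ) (hH₀ : H₀ ∈ Set.Ioc (0:ℝ) 1)
    (ab : ℝ) (hab : 1 < ab)
    (δ : ℝ → ℝ)
    (hδ : ∀ H, δ H = ⨆ x : ℝ, |Φ x - Φ (ab ^ (H - H₀) * x)|) :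
    (∀ H ∈ Set.Ioc (0:ℝ) 1, (δ H = 0 ↔ H = H₀)) ∧
    (∀ H₁ ∈ Set.Ioc (0:ℝ) 1, ∀ H₂ ∈ Set.Ioc (0:ℝ) 1, H₁ ≤ H₂ → H₂ ≤ H₀ → δ H₂ ≤ δ H₁) ∧
    (∀ H₁ ∈ Set.Ioc (0:ℝ) 1, ∀ H₂ ∈ Set.Ioc (0:ℝ) 1, H₁ ≤ H₂ → H₀ ≤ H₁ → δ H₁ ≤ δ H₂) :=
  stmt3_general ℙ X Φ hΦ hcont hnonneg H₀ ab hab δ hδ
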